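/- Let S be a 0-left-cancellative semigroup with zero admitting least common multiples, let Λ be a nonempty finite subset of S, and let σ be an open string with σ ⊆ F_Λ which is maximal among the strings contained in F_Λ, in the sense that for every string μ, σ ⊆ μ ⊆ F_Λ implies σ = μ. Then φ_σ is an ultra-character of 𝔈(S). -/
import Mathlib


namespace ExSt

variable {S : Type*} [SemigroupWithZero S]

/-- `s` divides `t`: `t = s` or `t = s * u` for some `u`. -/
def Divides (s t : S) : Prop := t = s ∨ ∃ u : S, t = s * u

/-- `r` is a least common multiple of `s` and `t`. -/
def IsLCM (s t r : S) : Prop :=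
  (Set.range (s * ·) ∩ Set.range (t * ·) = Set.range (r * ·)) ∧ Divides s r ∧ Divides t r

/-- `S` is 0-left-cancellative. -/
def LeftCancel0 (S : Type*) [SemigroupWithZero S] : Prop :=
  ∀ s t r : S, s * t = s * r → s * t ≠ 0 → t = r

/-- `S` admits least common multiples. -/
def AdmitsLCM (S : Type*) [SemigroupWithZero S] : Prop :=
  ∀ s t : S, ∃ r : S, IsLCM s t r

/-- A string in `S`. -/
def IsString (σ : Set S) : Prop :=
  σ.Nonempty ∧ (0 : S) ∉ σ ∧ (∀ s t : S, Divides s t → t ∈ σ → s ∈ σ) ∧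
    ∀ s₁ ∈ σ, ∀ s₂ ∈ σ, ∃ s ∈ σ, Divides s₁ s ∧ Divides s₂ s

/-- `F_s = {x | s * x ≠ 0}`. -/
def Fset (s : S) : Set S := {x | s * x ≠ 0}

/-- `E_s = sS \ {0}`. -/
def Eset (s : S) : Set S := {y | ∃ x : S, y = s * x ∧ s * x ≠ 0}

/-- `F_w` for `w` in the unitization `t̃S = S ∪ {1}` (modelled as `Option S`, `none = 1`). -/
def FsetW : Option S → Set S
  | none => {x | x ≠ 0}
  | some s => Fset s

/-- `E_w` for `w` in the unitization, with `E_1 = S'`. -/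
def EsetW : Option S → Set S
  | none => {x | x ≠ 0}
  | some s => Eset s

/-- `F_Λ = ⋂_{w ∈ Λ} F_w`. -/
def FsetLam (Λ : Finset (Option S)) : Set S := ⋂ w ∈ Λ, FsetW w

/-- Left multiplication by `u ∈ t̃S` (with `1 · x = x`). -/
def thetaApp : Option S → S → S
  | none, x => x
  | some u, x => u * x

/-- `θ_u(X)` for `u ∈ t̃S`. -/
def thetaImg (u : Option S) (X : Set S) : Set S := thetaApp u '' X

/-- The family `𝔈(S)` of constructible sets. -/
def Econs (S : Type*) [SemigroupWithZero S] : Set (Set S) :=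
  {X | ∃ Λ : Finset (Option S), (∃ s : S, some s ∈ Λ) ∧ ∃ u ∈ Λ, X = thetaImg u (FsetLam Λ)}

/-- `r*σ = {t | t ∥ r·s for some s ∈ σ}`. -/
def rstar (r : S) (σ : Set S) : Set S := {t | ∃ s ∈ σ, Divides t (r * s)}

/-- `r⁻¹*σ = {t | r·t ∈ σ}`. -/
def rinvstar (r : S) (σ : Set S) : Set S := {t | r * t ∈ σ}

/-- `F*_r`: strings `σ` with `r·s ≠ 0` for all `s ∈ σ`. -/
def Fstar (r : S) : Set (Set S) := {σ | IsString σ ∧ ∀ s ∈ σ, r * s ≠ 0}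

/-- `E*_r`: strings `σ` with `σ ∩ rS ≠ ∅`. -/
def Estar (r : S) : Set (Set S) := {σ | IsString σ ∧ (σ ∩ Set.range (r * ·)).Nonempty}

/-- `F*_w` for `w` in the unitization, with `F*_1` the set of all strings. -/
def FstarW : Option S → Set (Set S)
  | none => {σ | IsString σ}
  | some r => Fstar r

/-- `F*_Λ = ⋂_{w ∈ Λ} F*_w`. -/
def FstarLam (Λ : Finset (Option S)) : Set (Set S) := ⋂ w ∈ Λ, FstarW w

/-- The action of `u ∈ t̃S` on strings (with `1*σ = σ`). -/
def thetaStarApp : Option S → Set S → Set S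
  | none => id
  | some u => rstar u

/-- `θ*_u(Y)` for `u ∈ t̃S`. -/
def thetaStarImg (u : Option S) (Y : Set (Set S)) : Set (Set S) := thetaStarApp u '' Y

/-- A character of the semilattice `E` (values `False`/`True` playing the role of `0`/`1`). -/
def IsCharacter (E : Set (Set S)) (φ : Set S → Prop) : Prop :=
  ¬ φ ∅ ∧ (∃ X ∈ E, φ X) ∧ ∀ X ∈ E, ∀ Y ∈ E, (φ (X ∩ Y) ↔ φ X ∧ φ Y)

/-- An ultra-character: a character maximal for the pointwise order on `E`. -/
def IsUltraCharacter (E : Set (Set S)) (φ : Set S → Prop) : Prop :=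
  IsCharacter E φ ∧
    ∀ ψ : Set S → Prop, IsCharacter E ψ → (∀ X ∈ E, φ X → ψ X) → ∀ X ∈ E, ψ X → φ X

/-- The character `φ_σ` associated with a string `σ`. -/
def phiStr (σ : Set S) (X : Set S) : Prop :=
  ∃ Λ : Finset (Option S), (∃ s : S, some s ∈ Λ) ∧ ∃ u ∈ Λ,
    X = thetaImg u (FsetLam Λ) ∧ σ ∈ thetaStarImg u (FstarLam Λ)

/-- The set `σ_φ = {s | φ(E_s) = 1}` associated with a character `φ`. -/
def sigmaOf (φ : Set S → Prop) : Set S := {s | φ (Eset s)}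

/-- The interior of a string. -/
def strInterior (σ : Set S) : Set S := {s | ∃ x : S, s * x ∈ σ}

/-! ### Auxiliary lemmas -/

section Aux

lemma div_refl (s : S) : Divides s s := Or.inl rfl

lemma div_mul (s u : S) : Divides s (s * u) := Or.inr ⟨u, rfl⟩

lemma div_trans {s t r : S} (h1 : Divides s t) (h2 : Divides t r) : Divides s r := by
  rcases h1 with rfl | ⟨u, rfl⟩
  · exact h2
  · rcases h2 with rfl | ⟨v, rfl⟩
    · exact Or.inr ⟨u, rfl⟩
    · exact Or.inr ⟨u * v, by rw [mul_assoc]⟩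

lemma div_mul_left {t w : S} (r : S) (h : Divides t w) : Divides (r * t) (r * w) := by
  rcases h with rfl | ⟨v, rfl⟩
  · exact Or.inl rfl
  · exact Or.inr ⟨v, (mul_assoc r t v).symm⟩

lemma div_ne_zero' {t y : S} (h : Divides t y) (hy : y ≠ 0) : t ≠ 0 := by
  rcases h with rfl | ⟨v, rfl⟩
  · exact hy
  · rintro rfl; exact hy (zero_mul v)

lemma mul_ne_zero_div {w t y : S} (h : Divides t y) (hy : w * y ≠ 0) : w * t ≠ 0 := by
  rcases h with rfl | ⟨v, rfl⟩
  · exact hy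
  · intro h0; apply hy; rw [← mul_assoc, h0, zero_mul]

lemma div_cancel (hlc : LeftCancel0 S) {u t y : S} (h : Divides (u * t) (u * y))
    (hne : u * y ≠ 0) : Divides t y := by
  rcases h with h | ⟨v, h⟩
  · exact Or.inl (hlc u y t h hne)
  · rw [mul_assoc] at h
    exact Or.inr ⟨v, hlc u y (t * v) h hne⟩

lemma thetaApp_cancel (hlc : LeftCancel0 S) {u : Option S} {x y : S}
    (h : thetaApp u x = thetaApp u y) (hne : thetaApp u x ≠ 0) : x = y := by
  cases u with
  | none => exact h
  | some u₀ => exact hlc u₀ x y h hne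

lemma mem_FsetW_iff {w : Option S} {c : S} : c ∈ FsetW w ↔ thetaApp w c ≠ 0 := by
  cases w <;> exact Iff.rfl

lemma mem_FsetLam {Λ : Finset (Option S)} {x : S} :
    x ∈ FsetLam Λ ↔ ∀ w ∈ Λ, x ∈ FsetW w := Set.mem_iInter₂

lemma theta_ne_zero {w : Option S} {c : S} (h : c ∈ FsetW w) : thetaApp w c ≠ 0 :=
  mem_FsetW_iff.mp h

lemma string_mem_ne_zero {σ : Set S} (hσ : IsString σ) {s : S} (hs : s ∈ σ) : s ≠ 0 :=
  fun h => hσ.2.1 (h ▸ hs)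

lemma FsetLam_div {Λ : Finset (Option S)} (hΛS : ∃ s : S, some s ∈ Λ) {t y : S}
    (h : Divides t y) (hy : y ∈ FsetLam Λ) : t ∈ FsetLam Λ := by
  obtain ⟨s₁, hs₁⟩ := hΛS
  have hy0 : y ≠ 0 := by
    intro h0
    have h2 : s₁ * y ≠ 0 := mem_FsetLam.mp hy _ hs₁
    rw [h0, mul_zero] at h2
    exact h2 rfl
  rw [mem_FsetLam] at hy ⊢
  intro w hw
  have hyw := hy w hw
  rw [mem_FsetW_iff] at hyw ⊢
  cases w with
  | none => exact div_ne_zero' h hy0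
  | some w₁ => exact mul_ne_zero_div h hyw

/-- combination map used for intersections of constructible sets. -/
def mmap : Option S → Option S → Option S
  | none, w => w
  | some a, none => some a
  | some a, some w => some (w * a)

lemma mem_FsetW_mmap {d w : Option S} {c : S} :
    c ∈ FsetW (mmap d w) ↔ thetaApp d c ∈ FsetW w := by
  cases d with
  | none => exact Iff.rfl
  | some a =>
    cases w with
    | none => exact Iff.rfl
    | some w₁ =>
      show (w₁ * a) * c ≠ 0 ↔ w₁ * (a * c) ≠ 0
      rw [mul_assoc]

lemma inter_pres [DecidableEq (Option S)] (hlc : LeftCancel0 S) {Λ M : Finset (Option S)} {u v r d e : Option S}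
    (hu : u ∈ Λ) (hv : v ∈ M)
    (Hud : ∀ c : S, thetaApp r c = thetaApp u (thetaApp d c))
    (Hve : ∀ c : S, thetaApp r c = thetaApp v (thetaApp e c))
    (Hrange : ∀ z : S, z ≠ 0 → (∃ x, thetaApp u x = z) → (∃ y, thetaApp v y = z) →
      ∃ c, thetaApp r c = z) :
    thetaImg u (FsetLam Λ) ∩ thetaImg v (FsetLam M) =
      thetaImg r (FsetLam (insert r (Λ.image (mmap d) ∪ M.image (mmap e)))) := by
  classical
  ext z
  constructor
  · rintro ⟨⟨x, hx, hzx⟩, ⟨y, hy, hzy⟩⟩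
    have hz0 : z ≠ 0 := by
      rw [← hzx]
      exact theta_ne_zero (mem_FsetLam.mp hx _ hu)
    obtain ⟨c, hc⟩ := Hrange z hz0 ⟨x, hzx⟩ ⟨y, hzy⟩
    have hxc : x = thetaApp d c :=
      thetaApp_cancel hlc (u := u) (by rw [hzx, ← hc]; exact Hud c) (by rw [hzx]; exact hz0)
    have hye : y = thetaApp e c :=
      thetaApp_cancel hlc (u := v) (by rw [hzy, ← hc]; exact Hve c) (by rw [hzy]; exact hz0)
    refine ⟨c, ?_, hc⟩
    rw [mem_FsetLam]
    intro w hw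
    rcases Finset.mem_insert.mp hw with rfl | hw'
    · rw [mem_FsetW_iff, hc]; exact hz0
    rcases Finset.mem_union.mp hw' with hw1 | hw2
    · obtain ⟨w₀, hw₀, rfl⟩ := Finset.mem_image.mp hw1
      rw [mem_FsetW_mmap, ← hxc]
      exact mem_FsetLam.mp hx _ hw₀
    · obtain ⟨w₀, hw₀, rfl⟩ := Finset.mem_image.mp hw2
      rw [mem_FsetW_mmap, ← hye]
      exact mem_FsetLam.mp hy _ hw₀
  · rintro ⟨c, hc, hzc⟩
    have hcF := mem_FsetLam.mp hc
    have hz0 : z ≠ 0 := by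
      rw [← hzc]
      exact theta_ne_zero (hcF _ (Finset.mem_insert_self _ _))
    constructor
    · refine ⟨thetaApp d c, ?_, by rw [← Hud c]; exact hzc⟩
      rw [mem_FsetLam]
      intro w hw
      rw [← mem_FsetW_mmap]
      exact hcF _ (Finset.mem_insert_of_mem (Finset.mem_union_left _ (Finset.mem_image_of_mem _ hw)))
    · refine ⟨thetaApp e c, ?_, by rw [← Hve c]; exact hzc⟩
      rw [mem_FsetLam]
      intro w hw
      rw [← mem_FsetW_mmap]
      exact hcF _ (Finset.mem_insert_of_mem (Finset.mem_union_right _ (Finset.mem_image_of_mem _ hw)))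

lemma Econs_inter (hlc : LeftCancel0 S) (hlcm : AdmitsLCM S) {X Y : Set S}
    (hX : X ∈ Econs S) (hY : Y ∈ Econs S) : X ∩ Y ∈ Econs S := by
  classical
  obtain ⟨Λ, ⟨s₁, hs₁⟩, u, hu, rfl⟩ := hX
  obtain ⟨M, ⟨s₂, hs₂⟩, v, hv, rfl⟩ := hY
  obtain ⟨r, d, e, Hud, Hve, Hrange⟩ :
      ∃ r d e : Option S, (∀ c : S, thetaApp r c = thetaApp u (thetaApp d c)) ∧
        (∀ c : S, thetaApp r c = thetaApp v (thetaApp e c)) ∧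
        (∀ z : S, z ≠ 0 → (∃ x, thetaApp u x = z) → (∃ y, thetaApp v y = z) →
          ∃ c, thetaApp r c = z) := by
    cases u with
    | none => exact ⟨v, v, none, fun c => rfl, fun c => rfl, fun z _ _ hy => hy⟩
    | some u₀ =>
      cases v with
      | none => exact ⟨some u₀, none, some u₀, fun c => rfl, fun c => rfl, fun z _ hx _ => hx⟩
      | some v₀ =>
        obtain ⟨r₀, hr, hdu, hdv⟩ := hlcm u₀ v₀
        obtain ⟨d, Hud⟩ : ∃ d : Option S,
            ∀ c : S, thetaApp (some r₀) c = thetaApp (some u₀) (thetaApp d c) := by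
          rcases hdu with h | ⟨a, ha⟩
          · exact ⟨none, fun c => by show r₀ * c = u₀ * c; rw [h]⟩
          · exact ⟨some a, fun c => by show r₀ * c = u₀ * (a * c); rw [ha, mul_assoc]⟩
        obtain ⟨e, Hve⟩ : ∃ e : Option S,
            ∀ c : S, thetaApp (some r₀) c = thetaApp (some v₀) (thetaApp e c) := by
          rcases hdv with h | ⟨a, ha⟩
          · exact ⟨none, fun c => by show r₀ * c = v₀ * c; rw [h]⟩
          · exact ⟨some a, fun c => by show r₀ * c = v₀ * (a * c); rw [ha, mul_assoc]⟩
        refine ⟨some r₀, d, e, Hud, Hve, ?_⟩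
        intro z _ hx hy
        have hz : z ∈ Set.range (r₀ * ·) := by
          rw [← hr]; exact ⟨hx, hy⟩
        exact hz
  have hsome : ∃ s : S, some s ∈ insert r (Λ.image (mmap d) ∪ M.image (mmap e)) := by
    cases d with
    | none =>
      exact ⟨s₁, Finset.mem_insert_of_mem (Finset.mem_union_left _
        (Finset.mem_image_of_mem _ hs₁))⟩
    | some a =>
      exact ⟨s₁ * a, Finset.mem_insert_of_mem (Finset.mem_union_left _
        (Finset.mem_image_of_mem (mmap (some a)) hs₁))⟩
  exact ⟨insert r (Λ.image (mmap d) ∪ M.image (mmap e)), hsome, r,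
    Finset.mem_insert_self _ _, inter_pres hlc hu hv Hud Hve Hrange⟩

/-- The intrinsic predicate `Q`. -/
def Qpred (σ X : Set S) : Prop := ∃ s, s ∈ X ∧ s ∈ σ ∧ ∀ t ∈ σ, Divides s t → t ∈ X

lemma rinv_isString (hlc : LeftCancel0 S) {σ : Set S} (hσ : IsString σ)
    (hopen : σ = strInterior σ) {u₀ : S} (hu : u₀ ∈ σ) : IsString (rinvstar u₀ σ) := by
  obtain ⟨hne, h0, hdiv, hdir⟩ := hσ
  refine ⟨?_, ?_, ?_, ?_⟩
  · have hu' := hu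
    rw [hopen] at hu'
    obtain ⟨x, hx⟩ := hu'
    exact ⟨x, hx⟩
  · intro h
    have h' : u₀ * 0 ∈ σ := h
    rw [mul_zero] at h'
    exact h0 h'
  · intro s t hst ht
    exact hdiv (u₀ * s) (u₀ * t) (div_mul_left u₀ hst) ht
  · intro t₁ ht₁ t₂ ht₂
    obtain ⟨w, hw, hw1, hw2⟩ := hdir _ ht₁ _ ht₂
    rcases hw1 with rfl | ⟨v, rfl⟩
    · exact ⟨t₁, ht₁, div_refl _,
        div_cancel hlc hw2 (fun h => h0 (h ▸ hw))⟩
    · rw [mul_assoc] at hw hw2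
      exact ⟨t₁ * v, hw, div_mul _ _,
        div_cancel hlc hw2 (fun h => h0 (h ▸ hw))⟩

lemma rstar_rinv {σ : Set S} (hσ : IsString σ)
    (hopen : σ = strInterior σ) {u₀ : S} (hu : u₀ ∈ σ) :
    rstar u₀ (rinvstar u₀ σ) = σ := by
  ext t
  constructor
  · rintro ⟨s, hs, hts⟩
    exact hσ.2.2.1 t (u₀ * s) hts hs
  · intro ht
    obtain ⟨w, hw, hwt, hwu⟩ := hσ.2.2.2 t ht u₀ hu
    rcases hwu with rfl | ⟨s, rfl⟩
    · have hu' := hu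
      rw [hopen] at hu'
      obtain ⟨x, hx⟩ := hu'
      exact ⟨x, hx, div_trans hwt (div_mul w x)⟩
    · exact ⟨s, hw, hwt⟩

lemma lemC (hlc : LeftCancel0 S) {σ : Set S} (hσ : IsString σ) (hopen : σ = strInterior σ)
    {Λ : Finset (Option S)} (hΛS : ∃ s : S, some s ∈ Λ) {u : Option S} (hu : u ∈ Λ) :
    σ ∈ thetaStarImg u (FstarLam Λ) ↔ Qpred σ (thetaImg u (FsetLam Λ)) := by
  cases u with
  | none =>
    have himg : thetaImg none (FsetLam Λ) = FsetLam Λ := Set.image_id _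
    constructor
    · rintro ⟨τ, hτ, hτσ⟩
      have hτσ' : τ = σ := hτσ
      subst hτσ'
      have hτW : ∀ w ∈ Λ, τ ∈ FstarW w := Set.mem_iInter₂.mp hτ
      have hsubF : τ ⊆ FsetLam Λ := by
        intro t ht
        rw [mem_FsetLam]
        intro w hw
        cases w with
        | none => exact string_mem_ne_zero hσ ht
        | some w₁ => exact (hτW _ hw).2 t ht
      obtain ⟨s₀, hs₀⟩ := hσ.1
      rw [himg]
      exact ⟨s₀, hsubF hs₀, hs₀, fun t ht _ => hsubF ht⟩
    · rintro ⟨s₀, hs₀X, hs₀σ, htail⟩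
      rw [himg] at hs₀X htail
      have hsubF : σ ⊆ FsetLam Λ := by
        intro t ht
        obtain ⟨w, hw, h1, h2⟩ := hσ.2.2.2 s₀ hs₀σ t ht
        exact FsetLam_div hΛS h2 (htail w hw h1)
      refine ⟨σ, ?_, rfl⟩
      apply Set.mem_iInter₂.mpr
      intro w hw
      cases w with
      | none => exact hσ
      | some w₁ =>
        exact ⟨hσ, fun t ht => mem_FsetLam.mp (hsubF ht) _ hw⟩
  | some u₀ =>
    constructor
    · rintro ⟨τ, hτ, rfl⟩
      have hτW : ∀ w ∈ Λ, τ ∈ FstarW w := Set.mem_iInter₂.mp hτ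
      have hτstr : IsString τ := (hτW _ hu).1
      have hτ0 : ∀ s ∈ τ, u₀ * s ≠ 0 := (hτW _ hu).2
      have hτF : ∀ s ∈ τ, s ∈ FsetLam Λ := by
        intro s hs
        rw [mem_FsetLam]
        intro w hw
        cases w with
        | none => exact string_mem_ne_zero hτstr hs
        | some w₁ => exact (hτW _ hw).2 s hs
      obtain ⟨s₀, hs₀⟩ := hτstr.1
      refine ⟨u₀ * s₀, ⟨s₀, hτF s₀ hs₀, rfl⟩, ⟨s₀, hs₀, div_refl _⟩, ?_⟩
      rintro t ⟨s, hsτ, hts⟩ hdvd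
      rcases hdvd with rfl | ⟨v, rfl⟩
      · exact ⟨s₀, hτF s₀ hs₀, rfl⟩
      · rw [mul_assoc] at hts
        have hdv : Divides (s₀ * v) s := div_cancel hlc hts (hτ0 s hsτ)
        exact ⟨s₀ * v, FsetLam_div hΛS hdv (hτF s hsτ), (mul_assoc u₀ s₀ v).symm⟩
    · rintro ⟨z, hzX, hzσ, htail⟩
      obtain ⟨x₀, hx₀, hzx⟩ := hzX
      have hu₀σ : u₀ ∈ σ := by
        have hd : Divides u₀ z := hzx ▸ div_mul u₀ x₀
        exact hσ.2.2.1 u₀ z hd hzσ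
      have hτstr : IsString (rinvstar u₀ σ) := rinv_isString hlc hσ hopen hu₀σ
      have hkey : ∀ t ∈ rinvstar u₀ σ, t ∈ FsetLam Λ := by
        intro t ht
        obtain ⟨w', hw', h1, h2⟩ := hσ.2.2.2 z hzσ (u₀ * t) ht
        obtain ⟨y, hyF, hyw⟩ := htail w' hw' h1
        rw [← hyw] at h2
        have hne : thetaApp (some u₀) y ≠ 0 := by
          rw [hyw]; exact string_mem_ne_zero hσ hw'
        exact FsetLam_div hΛS (div_cancel hlc h2 hne) hyF
      refine ⟨rinvstar u₀ σ, ?_, rstar_rinv hσ hopen hu₀σ⟩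
      apply Set.mem_iInter₂.mpr
      intro w hw
      cases w with
      | none => exact hτstr
      | some w₁ =>
        exact ⟨hτstr, fun t ht => mem_FsetLam.mp (hkey t ht) _ hw⟩

lemma phi_iff_Q (hlc : LeftCancel0 S) {σ : Set S} (hσ : IsString σ)
    (hopen : σ = strInterior σ) {X : Set S} (hX : X ∈ Econs S) :
    phiStr σ X ↔ Qpred σ X := by
  constructor
  · rintro ⟨Λ, hΛS, u, hu, rfl, hmem⟩
    exact (lemC hlc hσ hopen hΛS hu).mp hmem
  · intro hQ
    obtain ⟨Λ, hΛS, u, hu, rfl⟩ := hX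
    exact ⟨Λ, hΛS, u, hu, rfl, (lemC hlc hσ hopen hΛS hu).mpr hQ⟩

lemma Eset_eq (s : S) : Eset s = thetaImg (some s) (FsetLam {some s}) := by
  ext z
  constructor
  · rintro ⟨x, rfl, hne⟩
    refine ⟨x, ?_, rfl⟩
    rw [mem_FsetLam]
    intro w hw
    rw [Finset.mem_singleton] at hw
    subst hw
    exact hne
  · rintro ⟨x, hx, rfl⟩
    exact ⟨x, rfl, mem_FsetLam.mp hx _ (Finset.mem_singleton_self _)⟩

lemma Eset_mem (s : S) : Eset s ∈ Econs S :=
  ⟨{some s}, ⟨s, Finset.mem_singleton_self _⟩, some s, Finset.mem_singleton_self _, Eset_eq s⟩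

lemma Eset_anti {s t : S} (h : Divides s t) : Eset t ⊆ Eset s := by
  rintro z ⟨x, rfl, hne⟩
  rcases h with rfl | ⟨u, rfl⟩
  · exact ⟨x, rfl, hne⟩
  · exact ⟨u * x, mul_assoc s u x, by rw [← mul_assoc]; exact hne⟩

lemma Eset_inter_lcm {s t r : S} (h : IsLCM s t r) : Eset s ∩ Eset t = Eset r := by
  obtain ⟨hrange, hds, hdt⟩ := h
  ext z
  constructor
  · rintro ⟨⟨x, rfl, hxne⟩, ⟨y, hy, hyne⟩⟩
    have hz : s * x ∈ Set.range (r * ·) := by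
      rw [← hrange]; exact ⟨⟨x, rfl⟩, ⟨y, hy.symm⟩⟩
    obtain ⟨c, hc⟩ := hz
    have hc' : r * c = s * x := hc
    exact ⟨c, hc'.symm, by rw [hc']; exact hxne⟩
  · rintro ⟨c, rfl, hcne⟩
    have hz : r * c ∈ Set.range (s * ·) ∩ Set.range (t * ·) := by
      rw [hrange]; exact ⟨c, rfl⟩
    obtain ⟨⟨x, hx⟩, ⟨y, hy⟩⟩ := hz
    have hx' : s * x = r * c := hx
    have hy' : t * y = r * c := hy
    exact ⟨⟨x, hx'.symm, by rw [hx']; exact hcne⟩, ⟨y, hy'.symm, by rw [hy']; exact hcne⟩⟩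

lemma char_mono {E : Set (Set S)} {ψ : Set S → Prop} (h : IsCharacter E ψ) {X Y : Set S}
    (hX : X ∈ E) (hY : Y ∈ E) (hXY : X ⊆ Y) (hpX : ψ X) : ψ Y :=
  ((h.2.2 X hX Y hY).mp ((Set.inter_eq_self_of_subset_left hXY).symm ▸ hpX)).2

lemma char_inter_nonempty {E : Set (Set S)} {ψ : Set S → Prop} (h : IsCharacter E ψ)
    {X Y : Set S} (hX : X ∈ E) (hY : Y ∈ E) (hpX : ψ X) (hpY : ψ Y) : (X ∩ Y).Nonempty := by
  rw [Set.nonempty_iff_ne_empty]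
  intro hempty
  exact h.1 (hempty ▸ ((h.2.2 X hX Y hY).mpr ⟨hpX, hpY⟩))

end Aux

/-- If `σ` is an open string contained in `F_Λ` (`Λ ⊆ S` finite nonempty) and maximal among
the strings contained in `F_Λ`, then `φ_σ` is an ultra-character. -/
theorem relatively_maximal_string_ultra (hlc : LeftCancel0 S) (hlcm : AdmitsLCM S)
    (Λ : Finset S) (hΛ : Λ.Nonempty) (σ : Set S) (hσ : IsString σ)
    (hopen : σ = strInterior σ) (hsub : σ ⊆ ⋂ s ∈ Λ, Fset s)
    (hrelmax : ∀ μ : Set S, IsString μ → σ ⊆ μ → μ ⊆ (⋂ s ∈ Λ, Fset s) → σ = μ) :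
    IsUltraCharacter (Econs S) (phiStr σ) := by
  classical
  obtain ⟨sΛ, hsΛ⟩ := hΛ
  set L' : Finset (Option S) := insert none (Λ.image some) with hL'
  have hL'some : some sΛ ∈ L' := Finset.mem_insert_of_mem (Finset.mem_image_of_mem _ hsΛ)
  have hY₀E : thetaImg none (FsetLam L') ∈ Econs S :=
    ⟨L', ⟨sΛ, hL'some⟩, none, Finset.mem_insert_self _ _, rfl⟩
  have hφY₀ : phiStr σ (thetaImg none (FsetLam L')) := by
    refine ⟨L', ⟨sΛ, hL'some⟩, none, Finset.mem_insert_self _ _, rfl, ⟨σ, ?_, rfl⟩⟩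
    apply Set.mem_iInter₂.mpr
    intro w hw
    rcases Finset.mem_insert.mp hw with rfl | hw'
    · exact hσ
    · obtain ⟨s, hsΛ', rfl⟩ := Finset.mem_image.mp hw'
      exact ⟨hσ, fun t ht => Set.mem_iInter₂.mp (hsub ht) s hsΛ'⟩
  constructor
  · refine ⟨?_, ?_, ?_⟩
    · rintro ⟨Λ', hΛS, u, hu, hEq, hmem⟩
      have hQ := (lemC hlc hσ hopen hΛS hu).mp hmem
      rw [← hEq] at hQ
      obtain ⟨s, hs, -⟩ := hQ
      exact hs
    · exact ⟨_, hY₀E, hφY₀⟩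
    · intro X hX Y hY
      rw [phi_iff_Q hlc hσ hopen (Econs_inter hlc hlcm hX hY), phi_iff_Q hlc hσ hopen hX,
        phi_iff_Q hlc hσ hopen hY]
      constructor
      · rintro ⟨s, ⟨hsX, hsY⟩, hsσ, htail⟩
        exact ⟨⟨s, hsX, hsσ, fun t ht hd => (htail t ht hd).1⟩,
          ⟨s, hsY, hsσ, fun t ht hd => (htail t ht hd).2⟩⟩
      · rintro ⟨⟨s₁, h1X, h1σ, t1⟩, ⟨s₂, h2X, h2σ, t2⟩⟩
        obtain ⟨s, hs, hd1, hd2⟩ := hσ.2.2.2 s₁ h1σ s₂ h2σ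
        exact ⟨s, ⟨t1 s hs hd1, t2 s hs hd2⟩, hs,
          fun t ht hd => ⟨t1 t ht (div_trans hd1 hd), t2 t ht (div_trans hd2 hd)⟩⟩
  · intro ψ hψ hle X hX hψX
    have hψY₀ : ψ (thetaImg none (FsetLam L')) := hle _ hY₀E hφY₀
    have hσsub : σ ⊆ sigmaOf ψ := by
      intro s hs
      apply hle _ (Eset_mem s)
      refine ⟨{some s}, ⟨s, Finset.mem_singleton_self _⟩, some s, Finset.mem_singleton_self _,
        Eset_eq s, ?_⟩
      apply (lemC hlc hσ hopen ⟨s, Finset.mem_singleton_self _⟩ (Finset.mem_singleton_self _)).mpr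
      rw [← Eset_eq s]
      have hs' := hs
      rw [hopen] at hs'
      obtain ⟨x, hx⟩ := hs'
      refine ⟨s * x, ⟨x, rfl, string_mem_ne_zero hσ hx⟩, hx, ?_⟩
      intro t ht hd
      rcases hd with rfl | ⟨v, rfl⟩
      · exact ⟨x, rfl, string_mem_ne_zero hσ hx⟩
      · exact ⟨x * v, mul_assoc s x v, by rw [← mul_assoc]; exact string_mem_ne_zero hσ ht⟩
    have hσψ_str : IsString (sigmaOf ψ) := by
      refine ⟨?_, ?_, ?_, ?_⟩
      · obtain ⟨s₀, hs₀⟩ := hσ.1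
        exact ⟨s₀, hσsub hs₀⟩
      · intro h0
        have hE0 : Eset (0 : S) = ∅ := by
          ext z; simp [Eset]
        exact hψ.1 (hE0 ▸ h0)
      · intro s t hst ht
        exact char_mono hψ (Eset_mem t) (Eset_mem s) (Eset_anti hst) ht
      · intro s₁ h1 s₂ h2
        obtain ⟨r, hr⟩ := hlcm s₁ s₂
        refine ⟨r, ?_, hr.2.1, hr.2.2⟩
        have hint := (hψ.2.2 _ (Eset_mem s₁) _ (Eset_mem s₂)).mpr ⟨h1, h2⟩
        rwa [Eset_inter_lcm hr] at hint
    have hσψ_sub : sigmaOf ψ ⊆ ⋂ s ∈ Λ, Fset s := by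
      intro s hs
      obtain ⟨z, ⟨x, rfl, hzx⟩, hzY⟩ :=
        char_inter_nonempty hψ (Eset_mem s) hY₀E hs hψY₀
      obtain ⟨y, hyF, hyz⟩ := hzY
      have hy' : y = s * x := hyz
      rw [hy'] at hyF
      rw [Set.mem_iInter₂]
      intro w hw
      have hwL : some w ∈ L' := Finset.mem_insert_of_mem (Finset.mem_image_of_mem _ hw)
      have hwy : w * (s * x) ≠ 0 := mem_FsetLam.mp hyF _ hwL
      intro h0
      apply hwy
      rw [← mul_assoc, h0, zero_mul]
    have hσeq : σ = sigmaOf ψ := hrelmax _ hσψ_str hσsub hσψ_sub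
    obtain ⟨Λ₁, hΛ₁S, u, hu, rfl⟩ := hX
    refine ⟨Λ₁, hΛ₁S, u, hu, rfl, (lemC hlc hσ hopen hΛ₁S hu).mpr ?_⟩
    cases u with
    | none =>
      have hsubF : σ ⊆ FsetLam Λ₁ := by
        intro t ht
        have htψ : t ∈ sigmaOf ψ := hσeq ▸ ht
        obtain ⟨z, ⟨c, rfl, hzc⟩, hzX⟩ :=
          char_inter_nonempty hψ (Eset_mem t) ⟨Λ₁, hΛ₁S, none, hu, rfl⟩ htψ hψX
        obtain ⟨y, hyF, hyz⟩ := hzX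
        have hy' : y = t * c := hyz
        rw [hy'] at hyF
        exact FsetLam_div hΛ₁S (div_mul t c) hyF
      obtain ⟨s₀, hs₀⟩ := hσ.1
      exact ⟨s₀, ⟨s₀, hsubF hs₀, rfl⟩, hs₀, fun t ht _ => ⟨t, hsubF ht, rfl⟩⟩
    | some u₀ =>
      have hstar : ∀ t ∈ σ, ∀ x : S, t = u₀ * x → x ∈ FsetLam Λ₁ := by
        intro t ht x htx
        have htψ : t ∈ sigmaOf ψ := hσeq ▸ ht
        obtain ⟨z, ⟨c, rfl, hzc⟩, hzX⟩ :=
          char_inter_nonempty hψ (Eset_mem t) ⟨Λ₁, hΛ₁S, some u₀, hu, rfl⟩ htψ hψX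
        obtain ⟨y, hyF, hyz⟩ := hzX
        have hyz' : u₀ * y = t * c := hyz
        have h2 : u₀ * (x * c) = u₀ * y := by
          rw [← mul_assoc, ← htx]; exact hyz'.symm
        have hne : u₀ * (x * c) ≠ 0 := by
          rw [h2, hyz']; exact hzc
        have hxy : x * c = y := hlc u₀ (x * c) y h2 hne
        exact FsetLam_div hΛ₁S (Or.inr ⟨c, hxy.symm⟩) (hxy ▸ hyF)
      have hu₀ : u₀ ∈ σ := by
        rw [hσeq]
        refine char_mono hψ ⟨Λ₁, hΛ₁S, some u₀, hu, rfl⟩ (Eset_mem u₀) ?_ hψX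
        rintro z ⟨x, hxF, rfl⟩
        exact ⟨x, rfl, mem_FsetW_iff.mp (mem_FsetLam.mp hxF _ hu)⟩
      have hu₀' := hu₀
      rw [hopen] at hu₀'
      obtain ⟨x₀, hx₀⟩ := hu₀'
      refine ⟨u₀ * x₀, ⟨x₀, hstar _ hx₀ x₀ rfl, rfl⟩, hx₀, ?_⟩
      intro t ht hd
      rcases hd with rfl | ⟨v, rfl⟩
      · exact ⟨x₀, hstar _ hx₀ x₀ rfl, rfl⟩
      · exact ⟨x₀ * v, hstar _ ht (x₀ * v) (mul_assoc u₀ x₀ v), (mul_assoc u₀ x₀ v).symm⟩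

end ExSt
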